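/- arXiv:1011.4762 — 3 statements merged into one kernel-verified Lean document; each statement's English description precedes it below -/
import Mathlib

section
/- Let X be a compact topological space with a Borel probability measure μ, let L ⊆ C(X) be a finite-dimensional measure-separating subspace (with the topology induced by any norm on L), and let ν be a Borel measure on X absolutely continuous with respect to μ. Then, for each fixed j ∈ {1, …, q}, the map sending a q-tuple (u₁, …, u_q) of pairwise distinct elements of L to ν(Vⱼ), where Vⱼ = {x ∈ X : uⱼ(x) ≥ u_l(x) for all l = 1, …, q}, is continuous on the open subset of L^q consisting of q-tuples of pairwise distinct functions. -/
open MeasureTheory Filter Topology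

/-!
A point `x` at which `u j x` differs from every other `u l x` lies either in the interior or in
the exterior of the cell condition `∀ l, u l x ≤ u j x`, so its membership in the `j`-th cell is
locally constant in the tuple `u`. Measure separation makes almost every point of this kind, and
dominated convergence of the indicators gives continuity of `ν` of the cell; compactness of `X`
makes `C(X, ℝ)` metrizable, so that sequences suffice for this limit argument.
-/

lemma eventually_forall_le_iff_of_ne {ι : Type*} [Finite ι] {y : ι → ℝ} {j : ι}
    (hy : ∀ l, l ≠ j → y l ≠ y j) :
    ∀ᶠ z in 𝓝 y, (∀ l, z l ≤ z j) ↔ ∀ l, y l ≤ y j := by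
  by_cases hyj : ∀ l, y l ≤ y j
  · have hle : ∀ᶠ z in 𝓝 y, ∀ l, z l ≤ z j := by
      refine eventually_all.2 fun l => ?_
      rcases eq_or_ne l j with rfl | hl
      · exact Eventually.of_forall fun z => le_rfl
      · exact ((continuous_apply l).continuousAt.eventually_lt (continuous_apply j).continuousAt
          ((hyj l).lt_of_ne (hy l hl))).mono fun z => le_of_lt
    exact hle.mono fun z hz => iff_of_true hz hyj
  · obtain ⟨l, hl⟩ := not_forall.1 hyj
    rw [not_le] at hl
    filter_upwards [(continuous_apply j).continuousAt.eventually_lt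
      (continuous_apply l).continuousAt hl] with z hz
    exact iff_of_false (fun h => (h l).not_gt hz) fun h => (h l).not_gt hl

lemma ae_forall_apply_ne {X ι : Type*} [MeasurableSpace X] [Countable ι] {μ : Measure X}
    {f : ι → X → ℝ} (hf : Pairwise fun l k => μ {x | f l x = f k x} = 0) (j : ι) :
    ∀ᵐ x ∂μ, ∀ l, l ≠ j → f l x ≠ f j x := by
  refine ae_all_iff.2 fun l => ?_
  rcases eq_or_ne l j with rfl | hl
  · exact ae_of_all μ fun x h => absurd rfl h
  · exact (measure_eq_zero_iff_ae_notMem.1 (hf hl)).mono fun x hx _ => hx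

lemma isClosed_setOf_forall_le {X ι : Type*} [TopologicalSpace X] {f : ι → X → ℝ}
    (hf : ∀ l, Continuous (f l)) (j : ι) : IsClosed {x | ∀ l, f l x ≤ f j x} := by
  simp only [Set.ofPred_forall]
  exact isClosed_iInter fun l => isClosed_le (hf l) (hf j)

lemma continuousAt_measure_setOf_forall_le {P X ι : Type*} [TopologicalSpace P]
    [FirstCountableTopology P] [TopologicalSpace X] [MeasurableSpace X] [OpensMeasurableSpace X]
    [Finite ι]
    {ν : Measure X} [IsFiniteMeasure ν] {F : P → ι → C(X, ℝ)} (hF : Continuous F)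
    {p : P} {j : ι} (hp : ∀ᵐ x ∂ν, ∀ l, l ≠ j → F p l x ≠ F p j x) :
    ContinuousAt (fun v => ν {x | ∀ l, F v l x ≤ F v j x}) p := by
  have hcell : ∀ v, MeasurableSet {x | ∀ l, F v l x ≤ F v j x} := fun v =>
    (isClosed_setOf_forall_le (fun l => (F v l).continuous) j).measurableSet
  refine tendsto_measure_of_ae_tendsto_indicator_of_isFiniteMeasure (𝓝 p) (hcell p) hcell ?_
  filter_upwards [hp] with x hx
  have heval : Continuous fun v l => F v l x :=
    continuous_pi fun l => (continuous_eval_const x).comp ((continuous_apply l).comp hF)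
  exact heval.continuousAt.eventually (eventually_forall_le_iff_of_ne hx)

theorem stmt_11_general {X : Type*} [TopologicalSpace X] [CompactSpace X]
    [MeasurableSpace X] [BorelSpace X]
    (μ : Measure X)
    (L : Submodule ℝ C(X, ℝ))
    (hsep : ∀ f g : C(X, ℝ), f ∈ L → g ∈ L → f ≠ g → μ {x | f x = g x} = 0)
    (ν : Measure X) [IsFiniteMeasure ν] (hν : ν ≪ μ)
    (q : ℕ) (j : Fin q) :
    ContinuousOn
      (fun u : Fin q → L =>
        ν {x | ∀ l : Fin q, (u l : C(X, ℝ)) x ≤ (u j : C(X, ℝ)) x})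
      {u : Fin q → L | Function.Injective u} := by
  intro u hu
  have hdistinct : Pairwise fun l k => μ {x | (u l : C(X, ℝ)) x = (u k : C(X, ℝ)) x} = 0 :=
    fun l k hlk => hsep _ _ (u l).2 (u k).2 fun h => hlk (hu (Subtype.ext h))
  have hF : Continuous fun (v : Fin q → L) l => (v l : C(X, ℝ)) :=
    continuous_pi fun l => continuous_subtype_val.comp (continuous_apply l)
  exact (continuousAt_measure_setOf_forall_le hF
    (hν.ae_le (ae_forall_apply_ne hdistinct j))).continuousWithinAt

/-- For a measure-separating finite-dimensional subspace `L ⊆ C(X)` and a (finite) Borel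
measure `ν ≪ μ`, the measure of the `j`-th generalized Voronoi cell depends continuously on
the `q`-tuple of (pairwise distinct) functions. -/
theorem stmt_11 {X : Type*} [TopologicalSpace X] [CompactSpace X]
    [MeasurableSpace X] [BorelSpace X]
    (μ : Measure X) [IsProbabilityMeasure μ]
    (L : Submodule ℝ C(X, ℝ)) [FiniteDimensional ℝ L]
    (hsep : ∀ f g : C(X, ℝ), f ∈ L → g ∈ L → f ≠ g → μ {x | f x = g x} = 0)
    (ν : Measure X) [IsFiniteMeasure ν] (hν : ν ≪ μ)
    (q : ℕ) (j : Fin q) :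
    ContinuousOn
      (fun u : Fin q → L =>
        ν {x | ∀ l : Fin q, (u l : C(X, ℝ)) x ≤ (u j : C(X, ℝ)) x})
      {u : Fin q → L | Function.Injective u} :=
  stmt_11_general μ L hsep ν hν q j
end

section
/- Let U ⊆ ℝⁿ be a nonempty open connected set and let f : ℝⁿ → ℝ be a function that is analytic on U and not identically zero on U. Then the zero set {x ∈ U : f(x) = 0} has Lebesgue measure zero. -/
/-!
If the zero set `Z` had positive measure, Lebesgue's density theorem (for balls with moving
centers) would give a point `x ∈ Z` such that, for all `v` and `ρ > 0`, `Z` meets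
`x + t • closedBall v ρ` for arbitrarily small `t > 0`.
On the other hand, if `f` does not vanish near `x`, the lowest-order nonzero homogeneous term
`p_k` of its Taylor series at `x` dominates: choosing `v` with `p_k v ≠ 0`, one has
`f (x + t • u) = t ^ k (p_k u + O(t))`, which is nonzero for `u` near `v` and small `t > 0`.
So `f` vanishes near `x`, hence on all of `U` by the identity theorem.
-/

open MeasureTheory Metric Set Filter Topology Pointwise

section Density

variable {E : Type*} [NormedAddCommGroup E] [NormedSpace ℝ E] [MeasurableSpace E] [BorelSpace E]
  [SecondCountableTopology E] (μ : Measure E) [IsUnifLocDoublingMeasure μ]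
  [IsLocallyFiniteMeasure μ]

theorem IsUnifLocDoublingMeasure.ae_frequently_exists_add_smul_mem (S : Set E) :
    ∀ᵐ x ∂μ.restrict S, ∀ v : E, ∀ ρ > 0,
      ∃ᶠ t in 𝓝[>] (0 : ℝ), ∃ u ∈ closedBall v ρ, x + t • u ∈ S := by
  -- the constant `K` of the density theorem is chosen before `x`, so take all `K : ℕ` at once
  filter_upwards [ae_all_iff.2 fun K : ℕ => ae_tendsto_measure_inter_div μ S K]
    with x hx v ρ hρ hnot
  obtain ⟨K, hK⟩ := exists_nat_ge (‖v‖ / ρ)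
  have hvK : ‖v‖ ≤ K * ρ := (div_le_iff₀ hρ).1 hK
  have hδ : Tendsto (fun t : ℝ => t * ρ) (𝓝[>] 0) (𝓝[>] 0) := by
    refine tendsto_nhdsWithin_iff.2 ⟨?_, ?_⟩
    · exact ((continuous_mul_const ρ).tendsto' 0 0 (zero_mul ρ)).mono_left nhdsWithin_le_nhds
    · filter_upwards [self_mem_nhdsWithin] with t (ht : 0 < t) using mul_pos ht hρ
  have hx_mem : ∀ᶠ t in 𝓝[>] (0 : ℝ), x ∈ closedBall (x + t • v) (K * (t * ρ)) := by
    filter_upwards [self_mem_nhdsWithin] with t (ht : 0 < t)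
    rw [mem_closedBall, dist_self_add_right, norm_smul, Real.norm_of_nonneg ht.le]
    calc t * ‖v‖ ≤ t * (K * ρ) := by gcongr
      _ = K * (t * ρ) := by ring
  have hdisjoint : ∀ᶠ t in 𝓝[>] (0 : ℝ), S ∩ closedBall (x + t • v) (t * ρ) = ∅ := by
    filter_upwards [hnot, self_mem_nhdsWithin] with t ht (htpos : 0 < t)
    have hball : closedBall (x + t • v) (t * ρ) = x +ᵥ t • closedBall v ρ := by
      rw [smul_closedBall _ _ hρ.le, vadd_closedBall, Real.norm_of_nonneg htpos.le, vadd_eq_add]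
    rw [hball, eq_empty_iff_forall_notMem]
    rintro - ⟨hzS, -, ⟨u, hu, rfl⟩, rfl⟩
    exact ht ⟨u, hu, hzS⟩
  have hzero : ∀ᶠ t in 𝓝[>] (0 : ℝ),
      0 = μ (S ∩ closedBall (x + t • v) (t * ρ)) / μ (closedBall (x + t • v) (t * ρ)) := by
    filter_upwards [hdisjoint] with t ht
    rw [ht, measure_empty, ENNReal.zero_div]
  exact zero_ne_one (tendsto_nhds_unique (tendsto_const_nhds.congr' hzero)
    (hx K (fun t => x + t • v) (fun t => t * ρ) hδ hx_mem))

end Density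

section Analytic

variable {E F : Type*} [NormedAddCommGroup E] [NormedSpace ℝ E] [NormedAddCommGroup F]
  [NormedSpace ℝ F]

theorem HasFPowerSeriesAt.eventually_eq_zero_of_forall_apply_diag_eq_zero {f : E → F}
    {p : FormalMultilinearSeries ℝ E F} {x : E} (hp : HasFPowerSeriesAt f p x)
    (h : ∀ k, ∀ u : E, p k (fun _ => u) = 0) : ∀ᶠ z in 𝓝 x, f z = 0 := by
  filter_upwards [hp.eventually_hasSum_sub] with z hz
  exact hz.unique (by simpa only [h] using hasSum_zero)

theorem HasFPowerSeriesAt.isBigO_sub_lowest_term {f : E → F}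
    {p : FormalMultilinearSeries ℝ E F} {x : E} (hp : HasFPowerSeriesAt f p x) {k : ℕ}
    (hlow : ∀ m < k, ∀ u : E, p m (fun _ => u) = 0) :
    (fun y => f (x + y) - p k (fun _ => y)) =O[𝓝 0] fun y => ‖y‖ ^ (k + 1) := by
  convert hp.isBigO_sub_partialSum_pow (k + 1) using 3 with y
  rw [FormalMultilinearSeries.partialSum, Finset.sum_range_succ,
    Finset.sum_eq_zero fun m hm => hlow m (Finset.mem_range.1 hm) y, zero_add]

theorem exists_eventually_forall_closedBall_smul_ne_zero {g : E → F} {k : ℕ}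
    {q : ContinuousMultilinearMap ℝ (fun _ : Fin k => E) F}
    (hg : (fun y => g y - q (fun _ => y)) =O[𝓝 0] fun y => ‖y‖ ^ (k + 1))
    {v : E} (hv : q (fun _ => v) ≠ 0) :
    ∃ ρ > 0, ∀ᶠ t in 𝓝[>] (0 : ℝ), ∀ u ∈ closedBall v ρ, g (t • u) ≠ 0 := by
  set c := ‖q (fun _ => v)‖
  have hc : 0 < c := norm_pos_iff.2 hv
  have hq : Continuous fun u : E => q (fun _ => u) :=
    q.cont.comp (continuous_pi fun _ => continuous_id)
  obtain ⟨ρ, hρ, hqρ⟩ : ∃ ρ > 0, ∀ u ∈ closedBall v ρ, c / 2 < ‖q (fun _ => u)‖ :=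
    nhds_basis_closedBall.eventually_iff.1
      ((hq.norm.tendsto v).eventually (lt_mem_nhds (half_lt_self hc)))
  obtain ⟨C, hC, hCO⟩ := hg.exists_pos
  obtain ⟨ε, hε, hεO⟩ := Metric.eventually_nhds_iff.1 hCO.bound
  set B := ‖v‖ + ρ
  have hsmall : ∀ᶠ t in 𝓝 (0 : ℝ), t * B < ε ∧ t * (C * B ^ (k + 1)) < c / 2 :=
    (((continuous_mul_const B).tendsto' 0 0 (zero_mul _)).eventually (gt_mem_nhds hε)).and
      (((continuous_mul_const _).tendsto' 0 0 (zero_mul _)).eventually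
        (gt_mem_nhds (half_pos hc)))
  refine ⟨ρ, hρ, ?_⟩
  filter_upwards [nhdsWithin_le_nhds hsmall, self_mem_nhdsWithin]
    with t ⟨htε, htc⟩ (ht : 0 < t) u hu hzero
  have hnorm : ‖t • u‖ ≤ t * B := by
    rw [norm_smul, Real.norm_of_nonneg ht.le]
    exact mul_le_mul_of_nonneg_left (norm_le_of_mem_closedBall hu) ht.le
  have hlead : t ^ k * (c / 2) < ‖q (fun _ => t • u)‖ := by
    rw [q.map_smul_univ (fun _ => t) (fun _ => u), Finset.prod_const, Finset.card_univ,
      Fintype.card_fin, norm_smul, norm_pow, Real.norm_of_nonneg ht.le]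
    exact mul_lt_mul_of_pos_left (hqρ u hu) (pow_pos ht k)
  have hrem : ‖q (fun _ => t • u)‖ ≤ t ^ k * (t * (C * B ^ (k + 1))) := by
    have := hεO (show dist (t • u) 0 < ε by rw [dist_zero_right]; linarith)
    rw [hzero, zero_sub, norm_neg, norm_pow, norm_norm] at this
    calc ‖q (fun _ => t • u)‖ ≤ C * ‖t • u‖ ^ (k + 1) := this
      _ ≤ C * (t * B) ^ (k + 1) := by gcongr
      _ = t ^ k * (t * (C * B ^ (k + 1))) := by rw [mul_pow, pow_succ]; ring
  have := mul_lt_mul_of_pos_left htc (pow_pos ht k)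
  linarith

theorem AnalyticAt.eventuallyEq_zero_of_frequently_exists_add_smul_eq_zero {f : E → F} {x : E}
    (hf : AnalyticAt ℝ f x)
    (h : ∀ v : E, ∀ ρ > 0, ∃ᶠ t in 𝓝[>] (0 : ℝ), ∃ u ∈ closedBall v ρ, f (x + t • u) = 0) :
    f =ᶠ[𝓝 x] 0 := by
  classical
  obtain ⟨p, hp⟩ := hf
  by_contra hne
  have hdiag : ∃ k, ∃ v : E, p k (fun _ => v) ≠ 0 := by
    by_contra! h0
    exact hne (hp.eventually_eq_zero_of_forall_apply_diag_eq_zero h0)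
  obtain ⟨v, hv⟩ := Nat.find_spec hdiag
  have hlow : ∀ m < Nat.find hdiag, ∀ u : E, p m (fun _ => u) = 0 := fun m hm u => by
    by_contra hu
    exact Nat.find_min hdiag hm ⟨u, hu⟩
  obtain ⟨ρ, hρ, hne0⟩ :=
    exists_eventually_forall_closedBall_smul_ne_zero (hp.isBigO_sub_lowest_term hlow) hv
  obtain ⟨t, ⟨u, hu, hzero⟩, hne'⟩ := ((h v ρ hρ).and_eventually hne0).exists
  exact hne' u hu hzero

end Analytic

/-- The zero set of a real-analytic function, not identically zero on a nonempty open
connected set `U ⊆ ℝⁿ`, has Lebesgue measure zero. -/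
theorem stmt_12 (n : ℕ) (U : Set (EuclideanSpace ℝ (Fin n)))
    (hUo : IsOpen U) (hUc : IsConnected U)
    (f : EuclideanSpace ℝ (Fin n) → ℝ)
    (hf : AnalyticOnNhd ℝ f U) (hnz : ∃ x ∈ U, f x ≠ 0) :
    volume {x ∈ U | f x = 0} = 0 := by
  by_contra hvol
  set Z := {x ∈ U | f x = 0}
  have : (ae (volume.restrict Z)).NeBot := ae_neBot.2 (Measure.restrict_eq_zero.not.2 hvol)
  obtain ⟨x, hxU, hx⟩ := ((ae_restrict_of_ae_restrict_of_subset (sep_subset U _)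
    (ae_restrict_mem hUo.measurableSet)).and
    (IsUnifLocDoublingMeasure.ae_frequently_exists_add_smul_mem volume Z)).exists
  have hloc : f =ᶠ[𝓝 x] 0 := (hf x hxU).eventuallyEq_zero_of_frequently_exists_add_smul_eq_zero
    fun v ρ hρ => (hx v ρ hρ).mono fun _ ⟨u, hu, huZ⟩ => ⟨u, hu, huZ.2⟩
  obtain ⟨y, hyU, hy⟩ := hnz
  exact hy (hf.eqOn_zero_of_preconnected_of_eventuallyEq_zero hUc.isPreconnected hxU hloc hyU)
end

section
/- Let f₁, …, f_q be q pairwise distinct real polynomials of degree at most 2, and let g(x) = max{f₁(x), …, f_q(x)} be their upper envelope. Then the set of points x ∈ ℝ at which g is not analytic has at most 2(q−1) elements. -/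
/-!
Order the polynomials by their coefficient of `x ^ 2` and add them to the envelope one at a time,
smallest coefficient first. When `p` is added to the envelope `g` of the previous ones, the set
`{g < p}` is the intersection of the sets `{f < p}`, and `p - f` is a concave quadratic, so
`{g < p}` is an interval. Away from the (at most two) boundary points of that interval the new
envelope agrees locally with `p` or with `g`, so each step creates at most two new switching points.
-/

open Polynomial Set

lemma Polynomial.concaveOn_eval_of_degree_le_two {p : ℝ[X]} (hp : p.degree ≤ 2)
    (h2 : p.coeff 2 ≤ 0) : ConcaveOn ℝ univ fun x => p.eval x := by
  have hquad : ∀ x, p.eval x = p.coeff 2 * x ^ 2 + p.coeff 1 * x + p.coeff 0 := fun x => by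
    conv_lhs => rw [eq_quadratic_of_degree_le_two hp]
    simp
  refine ⟨convex_univ, fun x _ y _ s t hs ht hst => ?_⟩
  obtain rfl : t = 1 - s := by linarith
  simp only [smul_eq_mul, hquad]
  nlinarith [mul_nonneg (neg_nonneg.2 h2) (mul_nonneg (mul_nonneg hs ht) (sq_nonneg (x - y)))]

lemma Polynomial.convex_setOf_eval_lt_eval {p r : ℝ[X]} (hp : p.degree ≤ 2) (hr : r.degree ≤ 2)
    (h2 : r.coeff 2 ≤ p.coeff 2) : Convex ℝ {x | p.eval x < r.eval x} := by
  have hconc : ConcaveOn ℝ univ fun x => (r - p).eval x :=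
    concaveOn_eval_of_degree_le_two ((degree_sub_le r p).trans (max_le hr hp))
      (by rw [coeff_sub]; linarith)
  simpa [sub_pos] using hconc.convex_gt 0

lemma Set.OrdConnected.encard_frontier_le_two {α : Type*} [LinearOrder α] [TopologicalSpace α]
    [OrderTopology α] {U : Set α} (hU : U.OrdConnected) : (frontier U).encard ≤ 2 := by
  have hsub : frontier U ⊆ (closure U ∩ lowerBounds U) ∪ (closure U ∩ upperBounds U) := by
    rintro x ⟨hcl, hint⟩
    by_contra hx
    simp only [mem_union, mem_inter_iff, hcl, true_and, mem_lowerBounds, mem_upperBounds,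
      not_or, not_forall, not_le] at hx
    obtain ⟨⟨u, hu, hux⟩, ⟨v, hv, hxv⟩⟩ := hx
    exact hint (interior_maximal (Ioo_subset_Icc_self.trans (hU.out hu hv)) isOpen_Ioo ⟨hux, hxv⟩)
  have hlow : (closure U ∩ lowerBounds U).Subsingleton := fun a ha b hb =>
    le_antisymm (by rw [← lowerBounds_closure] at ha; exact ha.2 hb.1)
      (by rw [← lowerBounds_closure] at hb; exact hb.2 ha.1)
  have hup : (closure U ∩ upperBounds U).Subsingleton := fun a ha b hb =>
    le_antisymm (by rw [← upperBounds_closure] at hb; exact hb.2 ha.1)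
      (by rw [← upperBounds_closure] at ha; exact ha.2 hb.1)
  calc (frontier U).encard
      ≤ (closure U ∩ lowerBounds U).encard + (closure U ∩ upperBounds U).encard :=
        (encard_le_encard hsub).trans (encard_union_le _ _)
    _ ≤ 1 + 1 := add_le_add (encard_le_one_iff_subsingleton.2 hlow)
        (encard_le_one_iff_subsingleton.2 hup)
    _ = 2 := one_add_one_eq_two

/-- Near a point of the interior of `{g < f}` the maximum `f ⊔ g` is `f`, near a point outside
its closure it is `g`. -/
lemma setOf_not_analyticAt_sup_subset {E : Type*} [NormedAddCommGroup E] [NormedSpace ℝ E]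
    (f g : E → ℝ) :
    {x | ¬AnalyticAt ℝ (f ⊔ g) x} ⊆
      {x | ¬AnalyticAt ℝ f x} ∪ {x | ¬AnalyticAt ℝ g x} ∪ frontier {x | g x < f x} := by
  intro x hx
  by_contra h
  simp only [mem_union, mem_ofPred_eq, not_or, not_not] at h
  obtain ⟨⟨hf, hg⟩, hfr⟩ := h
  by_cases hcl : x ∈ closure {x | g x < f x}
  · have hint : x ∈ interior {x | g x < f x} := by_contra fun hint => hfr ⟨hcl, hint⟩
    refine hx (hf.congr (Filter.eventually_of_mem (isOpen_interior.mem_nhds hint) fun y hy => ?_))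
    exact (sup_eq_left.2 (interior_subset hy : y ∈ {x | g x < f x}).le).symm
  · have hext : (closure {x | g x < f x})ᶜ ∈ nhds x := isClosed_closure.isOpen_compl.mem_nhds hcl
    refine hx (hg.congr (Filter.eventually_of_mem hext fun y hy => ?_))
    exact (sup_eq_right.2 (not_lt.1 fun hlt => hy (subset_closure hlt))).symm

theorem encard_setOf_not_analyticAt_sup'_eval_le {ι : Type*} (f : ι → ℝ[X]) (s : Finset ι)
    (hs : s.Nonempty) (hdeg : ∀ i ∈ s, (f i).degree ≤ 2) :
    {x | ¬AnalyticAt ℝ (fun y => s.sup' hs fun i => (f i).eval y) x}.encard ≤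
      ((2 * (s.card - 1) : ℕ) : ℕ∞) := by
  classical
  induction s using Finset.induction_on_min_value (fun i => (f i).coeff 2) with
  | empty => exact absurd hs Finset.not_nonempty_empty
  | insert a t hat hmin ih =>
    have hpoly : ∀ i x, AnalyticAt ℝ (fun y => (f i).eval y) x := fun i x =>
      AnalyticOnNhd.eval_polynomial (f i) x trivial
    rcases t.eq_empty_or_nonempty with rfl | ht
    · simp [hpoly]
    set g : ℝ → ℝ := fun y => t.sup' ht fun i => (f i).eval y
    have henv : (fun y => (insert a t).sup' hs fun i => (f i).eval y) =
        (fun y => (f a).eval y) ⊔ g := funext fun y => Finset.sup'_insert ht _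
    have hconv : Convex ℝ {x | g x < (f a).eval x} := by
      simp only [g, Finset.sup'_lt_iff, ofPred_forall]
      exact convex_iInter₂ fun i hi => convex_setOf_eval_lt_eval
        (hdeg i (Finset.mem_insert_of_mem hi)) (hdeg a (Finset.mem_insert_self a t)) (hmin i hi)
    have hg := ih ht fun i hi => hdeg i (Finset.mem_insert_of_mem hi)
    have hcard : (insert a t).card = t.card + 1 := Finset.card_insert_of_notMem hat
    have ht1 : 1 ≤ t.card := ht.card_pos
    rw [henv]
    calc _ ≤ ({x | ¬AnalyticAt ℝ (fun y => (f a).eval y) x} ∪ {x | ¬AnalyticAt ℝ g x} ∪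
            frontier {x | g x < (f a).eval x}).encard :=
          encard_le_encard (setOf_not_analyticAt_sup_subset _ _)
      _ ≤ 0 + ((2 * (t.card - 1) : ℕ) : ℕ∞) + 2 := by
          refine (encard_union_le _ _).trans (add_le_add ((encard_union_le _ _).trans
            (add_le_add ?_ hg)) hconv.ordConnected.encard_frontier_le_two)
          simp [hpoly]
      _ = ((2 * ((insert a t).card - 1) : ℕ) : ℕ∞) := by
          rw [hcard, zero_add]
          norm_cast
          omega

theorem stmt_16_general (q : ℕ) (f : Fin q → Polynomial ℝ)
    (hdeg : ∀ j, (f j).degree ≤ 2) :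
    {x : ℝ | ¬ AnalyticAt ℝ (fun y => ⨆ j : Fin q, (f j).eval y) x}.Finite ∧
    {x : ℝ | ¬ AnalyticAt ℝ (fun y => ⨆ j : Fin q, (f j).eval y) x}.ncard ≤ 2 * (q - 1) := by
  rw [← encard_le_coe_iff_finite_ncard_le]
  rcases q.eq_zero_or_pos with rfl | hq
  · simp [analyticAt_const]
  have : Nonempty (Fin q) := ⟨⟨0, hq⟩⟩
  simpa only [← Finset.sup'_univ_eq_ciSup, Finset.card_univ, Fintype.card_fin] using
    encard_setOf_not_analyticAt_sup'_eval_le f Finset.univ Finset.univ_nonempty fun j _ => hdeg j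

/-- The upper envelope of `q` pairwise distinct real polynomials of degree at most `2` has
at most `2(q-1)` points of non-analyticity (switching points). -/
theorem stmt_16 (q : ℕ) (hq : 0 < q) (f : Fin q → Polynomial ℝ)
    (hdeg : ∀ j, (f j).degree ≤ 2) (hinj : Function.Injective f) :
    {x : ℝ | ¬ AnalyticAt ℝ (fun y => ⨆ j : Fin q, (f j).eval y) x}.Finite ∧
    {x : ℝ | ¬ AnalyticAt ℝ (fun y => ⨆ j : Fin q, (f j).eval y) x}.ncard ≤ 2 * (q - 1) :=
  stmt_16_general q f hdeg
end
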